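/- Let (A, ≻, ≺) be a finite-dimensional anti-dendriform algebra and r ∈ A⊗A such that r + τ(r) is invariant. Then r is a solution of the anti-dendriform Yang-Baxter equation D(r) = r₁₂·r₁₃ + r₂₃≻r₁₂ - r₁₃≺r₂₃ = 0 if and only if τ(r) is a solution, i.e., D(τ(r)) = r₂₁·r₃₁ + r₃₂≻r₂₁ - r₃₁≺r₃₂ = 0. -/
import Mathlib


open TensorProduct

set_option synthInstance.maxHeartbeats 1000000
set_option maxHeartbeats 1600000

variable {K : Type*} [Field K]

/-- The anti-dendriform algebra identities for two bilinear operations `s` (≻) and `p` (≺):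
`x≻(y≻z) = -(x·y)≻z = -x≺(y·z) = (x≺y)≺z` and `(x≻y)≺z = x≻(y≺z)`, where `x·y = x≻y + x≺y`. -/
def IsAntiDend {M : Type*} [AddCommGroup M] [Module K M]
    (s p : M →ₗ[K] M →ₗ[K] M) : Prop :=
  ∀ x y z : M,
    s x (s y z) = - s (s x y + p x y) z ∧
    s x (s y z) = - p x (s y z + p y z) ∧
    s x (s y z) = p (p x y) z ∧
    p (s x y) z = s x (p y z)

/-- The bilinear map `a ⊗ b ↦ (ζ ↦ ζ(a) • b)` used to define `T_r`. -/
noncomputable def Tbil {M : Type*} [AddCommGroup M] [Module K M] :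
    M →ₗ[K] M →ₗ[K] (Module.Dual K M →ₗ[K] M) :=
  LinearMap.mk₂ K (fun a b => (Module.Dual.eval K M a).smulRight b)
    (fun a a' b => by ext ζ; simp [add_smul])
    (fun c a b => by
      ext ζ
      simp only [LinearMap.smulRight_apply, LinearMap.smul_apply, map_smul,
        Module.Dual.eval_apply, smul_eq_mul, mul_smul])
    (fun a b b' => by ext ζ; simp)
    (fun c a b => by
      ext ζ
      simp only [LinearMap.smulRight_apply, LinearMap.smul_apply]
      exact smul_comm _ _ _)

/-- `T_r : A* → A`, `⟨T_r ζ, η⟩ = ⟨r, ζ ⊗ η⟩`; concretely `T_r ζ = Σ ζ(aᵢ) • bᵢ`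
for `r = Σ aᵢ ⊗ bᵢ`. -/
noncomputable def TmL {M : Type*} [AddCommGroup M] [Module K M] (r : M ⊗[K] M) :
    Module.Dual K M →ₗ[K] M :=
  TensorProduct.lift Tbil r

/-- The flip `τ : A ⊗ A → A ⊗ A`. -/
noncomputable def tau {M : Type*} [AddCommGroup M] [Module K M] (r : M ⊗[K] M) : M ⊗[K] M :=
  TensorProduct.comm K M M r

/-- `r` is invariant: `(R_≺(x)⊗I + I⊗L_·(x)) r = 0` and `(R_·(x)⊗I + I⊗L_≻(x)) r = 0`. -/
def Invariant {M : Type*} [AddCommGroup M] [Module K M]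
    (s p : M →ₗ[K] M →ₗ[K] M) (r : M ⊗[K] M) : Prop :=
  ∀ x : M,
    TensorProduct.map (p.flip x) (LinearMap.id : M →ₗ[K] M) r
      + TensorProduct.map (LinearMap.id : M →ₗ[K] M) ((s + p) x) r = 0 ∧
    TensorProduct.map ((s + p).flip x) (LinearMap.id : M →ₗ[K] M) r
      + TensorProduct.map (LinearMap.id : M →ₗ[K] M) (s x) r = 0

/-- `(a⊗b)⊗(c⊗d) ↦ (m a c) ⊗ b ⊗ d` : the product is placed in the first tensor slot,
giving `r₁₂ ∗ r₁₃` when applied to `r ⊗ r`. -/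
noncomputable def place1 {M : Type*} [AddCommGroup M] [Module K M]
    (m : M →ₗ[K] M →ₗ[K] M) :
    (M ⊗[K] M) ⊗[K] (M ⊗[K] M) →ₗ[K] M ⊗[K] (M ⊗[K] M) :=
  (TensorProduct.map (TensorProduct.lift m)
      (LinearMap.id : M ⊗[K] M →ₗ[K] M ⊗[K] M)) ∘ₗ
    (TensorProduct.tensorTensorTensorComm K M M M M).toLinearMap

/-- `(a⊗b)⊗(c⊗d) ↦ c ⊗ (m a d) ⊗ b` : the product in the second slot, giving `r₂₃ ∗ r₁₂`. -/
noncomputable def place2 {M : Type*} [AddCommGroup M] [Module K M]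
    (m : M →ₗ[K] M →ₗ[K] M) :
    (M ⊗[K] M) ⊗[K] (M ⊗[K] M) →ₗ[K] M ⊗[K] (M ⊗[K] M) :=
  (TensorProduct.leftComm K M M M).toLinearMap ∘ₗ
  (TensorProduct.map (LinearMap.id : M →ₗ[K] M) (TensorProduct.comm K M M).toLinearMap) ∘ₗ
  (TensorProduct.map (TensorProduct.lift m)
      (LinearMap.id : M ⊗[K] M →ₗ[K] M ⊗[K] M)) ∘ₗ
  (TensorProduct.tensorTensorTensorComm K M M M M).toLinearMap ∘ₗ
  (TensorProduct.congr (LinearEquiv.refl K (M ⊗[K] M)) (TensorProduct.comm K M M)).toLinearMap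

/-- `(a⊗b)⊗(c⊗d) ↦ a ⊗ c ⊗ (m b d)` : the product in the third slot, giving `r₁₃ ∗ r₂₃`. -/
noncomputable def place3 {M : Type*} [AddCommGroup M] [Module K M]
    (m : M →ₗ[K] M →ₗ[K] M) :
    (M ⊗[K] M) ⊗[K] (M ⊗[K] M) →ₗ[K] M ⊗[K] (M ⊗[K] M) :=
  (TensorProduct.assoc K M M M).toLinearMap ∘ₗ
  (TensorProduct.map (LinearMap.id : M ⊗[K] M →ₗ[K] M ⊗[K] M) (TensorProduct.lift m)) ∘ₗ
  (TensorProduct.tensorTensorTensorComm K M M M M).toLinearMap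

/-- `D(r) = r₁₂·r₁₃ + r₂₃≻r₁₂ - r₁₃≺r₂₃`. -/
noncomputable def adD {M : Type*} [AddCommGroup M] [Module K M]
    (s p : M →ₗ[K] M →ₗ[K] M) (r : M ⊗[K] M) : M ⊗[K] (M ⊗[K] M) :=
  place1 (s + p) (r ⊗ₜ[K] r) + place2 s (r ⊗ₜ[K] r) - place3 p (r ⊗ₜ[K] r)

/-- `D₁(r) = r₂₃·r₁₂ + r₁₃≻r₂₃ + r₁₂≺r₁₃`. -/
noncomputable def adD1 {M : Type*} [AddCommGroup M] [Module K M]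
    (s p : M →ₗ[K] M →ₗ[K] M) (r : M ⊗[K] M) : M ⊗[K] (M ⊗[K] M) :=
  place2 (s + p) (r ⊗ₜ[K] r) + place3 s (r ⊗ₜ[K] r) + place1 p (r ⊗ₜ[K] r)

/-- `D₂(r) = r₁₃·r₂₃ - r₁₂≻r₁₃ + r₂₃≺r₁₂`. -/
noncomputable def adD2 {M : Type*} [AddCommGroup M] [Module K M]
    (s p : M →ₗ[K] M →ₗ[K] M) (r : M ⊗[K] M) : M ⊗[K] (M ⊗[K] M) :=
  place3 (s + p) (r ⊗ₜ[K] r) - place1 s (r ⊗ₜ[K] r) + place2 p (r ⊗ₜ[K] r)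

/-- The anti-dendriform Yang-Baxter equation `D(r) = 0`. -/
noncomputable def AYBE {M : Type*} [AddCommGroup M] [Module K M]
    (s p : M →ₗ[K] M →ₗ[K] M) (r : M ⊗[K] M) : Prop :=
  adD s p r = 0

variable {A : Type*} [AddCommGroup A] [Module K A]

namespace Stmt9Aux

/-- The flip as a linear map. -/
noncomputable def τm : A ⊗[K] A →ₗ[K] A ⊗[K] A := (TensorProduct.comm K A A).toLinearMap

/-- First invariance expression, bilinear in `(w, x)`. -/
noncomputable def J1 (s p : A →ₗ[K] A →ₗ[K] A) :
    (A ⊗[K] A) →ₗ[K] A →ₗ[K] (A ⊗[K] A) :=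
  LinearMap.mk₂ K
    (fun w x => TensorProduct.map (p.flip x) LinearMap.id w
      + TensorProduct.map LinearMap.id ((s + p) x) w)
    (fun w w' x => by simp only [map_add]; abel)
    (fun c w x => by simp only [map_smul, smul_add])
    (fun w x x' => by
      simp only [map_add, TensorProduct.map_add_left, TensorProduct.map_add_right,
        LinearMap.add_apply]
      abel)
    (fun c w x => by
      simp only [map_smul, TensorProduct.map_smul_left, TensorProduct.map_smul_right,
        LinearMap.smul_apply, smul_add])

/-- Second invariance expression, bilinear in `(w, x)`. -/
noncomputable def J2 (s p : A →ₗ[K] A →ₗ[K] A) :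
    (A ⊗[K] A) →ₗ[K] A →ₗ[K] (A ⊗[K] A) :=
  LinearMap.mk₂ K
    (fun w x => TensorProduct.map ((s + p).flip x) LinearMap.id w
      + TensorProduct.map LinearMap.id (s x) w)
    (fun w w' x => by simp only [map_add]; abel)
    (fun c w x => by simp only [map_smul, smul_add])
    (fun w x x' => by
      simp only [map_add, TensorProduct.map_add_left, TensorProduct.map_add_right,
        LinearMap.add_apply]
      abel)
    (fun c w x => by
      simp only [map_smul, TensorProduct.map_smul_left, TensorProduct.map_smul_right,
        LinearMap.smul_apply, smul_add])

/-- `w ⊗ (x ⊗ y) ↦ (F w x) ⊗ y`. -/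
noncomputable def Jm (F : (A ⊗[K] A) →ₗ[K] A →ₗ[K] (A ⊗[K] A)) :
    (A ⊗[K] A) ⊗[K] (A ⊗[K] A) →ₗ[K] (A ⊗[K] A) ⊗[K] A :=
  (TensorProduct.map (TensorProduct.lift F) (LinearMap.id : A →ₗ[K] A)) ∘ₗ
    (TensorProduct.assoc K (A ⊗[K] A) A A).symm.toLinearMap

/-- `(f ⊗ g) ⊗ y ↦ g ⊗ y ⊗ f`. -/
noncomputable def Pl201 : (A ⊗[K] A) ⊗[K] A →ₗ[K] A ⊗[K] (A ⊗[K] A) :=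
  (TensorProduct.map (LinearMap.id : A →ₗ[K] A) (TensorProduct.comm K A A).toLinearMap) ∘ₗ
    (TensorProduct.assoc K A A A).toLinearMap ∘ₗ
    (TensorProduct.map (TensorProduct.comm K A A).toLinearMap (LinearMap.id : A →ₗ[K] A))

/-- `(f ⊗ g) ⊗ y ↦ f ⊗ g ⊗ y`. -/
noncomputable def Pl012 : (A ⊗[K] A) ⊗[K] A →ₗ[K] A ⊗[K] (A ⊗[K] A) :=
  (TensorProduct.assoc K A A A).toLinearMap

/-- `(f ⊗ g) ⊗ y ↦ y ⊗ f ⊗ g`. -/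
noncomputable def Pl120 : (A ⊗[K] A) ⊗[K] A →ₗ[K] A ⊗[K] (A ⊗[K] A) :=
  (TensorProduct.comm K (A ⊗[K] A) A).toLinearMap

/-- `u ⊗ v ↦ u ⊗ τ(v)`. -/
noncomputable def idτ : (A ⊗[K] A) ⊗[K] (A ⊗[K] A) →ₗ[K] (A ⊗[K] A) ⊗[K] (A ⊗[K] A) :=
  TensorProduct.map LinearMap.id (τm (K := K))

/-- The total invariance-correction map. -/
noncomputable def Φtot (s p : A →ₗ[K] A →ₗ[K] A) :
    (A ⊗[K] A) ⊗[K] (A ⊗[K] A) →ₗ[K] A ⊗[K] (A ⊗[K] A) :=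
  - (Pl201 ∘ₗ Jm (J1 s p))
  + (Pl012 ∘ₗ Jm (J2 s p) ∘ₗ idτ)
  + (Pl120 ∘ₗ Jm (J1 s p) ∘ₗ idτ)
  - (Pl120 ∘ₗ Jm (J2 s p) ∘ₗ idτ)

/-- The bilinear version of `adD`. -/
noncomputable def DL (s p : A →ₗ[K] A →ₗ[K] A) :
    (A ⊗[K] A) ⊗[K] (A ⊗[K] A) →ₗ[K] A ⊗[K] (A ⊗[K] A) :=
  place1 (s + p) + place2 s - place3 p

noncomputable def Wm : (A ⊗[K] A) ⊗[K] (A ⊗[K] A) →ₗ[K] (A ⊗[K] A) ⊗[K] (A ⊗[K] A) :=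
  (TensorProduct.comm K (A ⊗[K] A) (A ⊗[K] A)).toLinearMap

noncomputable def TT : (A ⊗[K] A) ⊗[K] (A ⊗[K] A) →ₗ[K] (A ⊗[K] A) ⊗[K] (A ⊗[K] A) :=
  TensorProduct.map (τm (K := K)) (τm (K := K))

/-- The defect map, to be shown to vanish on the diagonal. -/
noncomputable def Nm (s p : A →ₗ[K] A →ₗ[K] A) :
    (A ⊗[K] A) ⊗[K] (A ⊗[K] A) →ₗ[K] A ⊗[K] (A ⊗[K] A) :=
  DL s p ∘ₗ TT - DL s p - Φtot s p ∘ₗ (TensorProduct.map (LinearMap.id + τm (K := K)) LinearMap.id)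

lemma Jm_tmul (F : (A ⊗[K] A) →ₗ[K] A →ₗ[K] (A ⊗[K] A)) (w : A ⊗[K] A) (x y : A) :
    Jm F (w ⊗ₜ[K] (x ⊗ₜ[K] y)) = (F w x) ⊗ₜ[K] y := by
  simp [Jm, TensorProduct.assoc_symm_tmul]

lemma alt (s p : A →ₗ[K] A →ₗ[K] A) :
    Nm s p + Nm s p ∘ₗ Wm = 0 := by
  apply TensorProduct.ext_fourfold'
  intro a b c d
  simp only [Nm, DL, TT, Φtot, Wm, idτ, τm, Pl201, Pl012, Pl120, place1, place2, place3,
    LinearMap.add_apply, LinearMap.sub_apply, LinearMap.neg_apply, LinearMap.comp_apply,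
    LinearMap.zero_apply, LinearEquiv.coe_coe, TensorProduct.map_tmul,
    TensorProduct.comm_tmul, TensorProduct.assoc_tmul, TensorProduct.assoc_symm_tmul,
    TensorProduct.leftComm_tmul, TensorProduct.tensorTensorTensorComm_tmul,
    TensorProduct.congr_tmul, LinearEquiv.refl_apply, TensorProduct.lift.tmul,
    LinearMap.id_coe, id_eq, Jm, J1, J2, LinearMap.mk₂_apply, LinearMap.flip_apply,
    TensorProduct.tmul_add, TensorProduct.add_tmul, map_add]
  abel

lemma diag (s p : A →ₗ[K] A →ₗ[K] A) (a b : A) :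
    Nm s p ((a ⊗ₜ[K] b) ⊗ₜ[K] (a ⊗ₜ[K] b)) = 0 := by
  simp only [Nm, DL, TT, Φtot, idτ, τm, Pl201, Pl012, Pl120, place1, place2, place3,
    LinearMap.add_apply, LinearMap.sub_apply, LinearMap.neg_apply, LinearMap.comp_apply,
    LinearEquiv.coe_coe, TensorProduct.map_tmul,
    TensorProduct.comm_tmul, TensorProduct.assoc_tmul, TensorProduct.assoc_symm_tmul,
    TensorProduct.leftComm_tmul, TensorProduct.tensorTensorTensorComm_tmul,
    TensorProduct.congr_tmul, LinearEquiv.refl_apply, TensorProduct.lift.tmul,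
    LinearMap.id_coe, id_eq, Jm, J1, J2, LinearMap.mk₂_apply, LinearMap.flip_apply,
    TensorProduct.tmul_add, TensorProduct.add_tmul, map_add]
  abel

lemma Nm_swap (s p : A →ₗ[K] A →ₗ[K] A) (u v : A ⊗[K] A) :
    Nm s p (v ⊗ₜ[K] u) = - Nm s p (u ⊗ₜ[K] v) := by
  have h := congrArg (fun f => f (u ⊗ₜ[K] v)) (alt s p)
  simp only [LinearMap.add_apply, LinearMap.comp_apply, LinearMap.zero_apply, Wm,
    LinearEquiv.coe_coe, TensorProduct.comm_tmul] at h
  exact eq_neg_of_add_eq_zero_right h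

lemma Nm_diag_zero (s p : A →ₗ[K] A →ₗ[K] A) (r : A ⊗[K] A) :
    Nm s p (r ⊗ₜ[K] r) = 0 := by
  induction r using TensorProduct.induction_on with
  | zero => simp
  | tmul a b => exact diag s p a b
  | add x y hx hy =>
    have hs : Nm s p (y ⊗ₜ[K] x) = - Nm s p (x ⊗ₜ[K] y) := Nm_swap s p x y
    simp only [TensorProduct.add_tmul, TensorProduct.tmul_add, map_add, hx, hy, hs]
    abel

lemma tau_eq (r : A ⊗[K] A) : tau (K := K) r = τm (K := K) r := rfl

lemma adD_eq_DL (s p : A →ₗ[K] A →ₗ[K] A) (u : A ⊗[K] A) :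
    adD s p u = DL s p (u ⊗ₜ[K] u) := by
  simp [adD, DL]

lemma phi_pure (s p : A →ₗ[K] A →ₗ[K] A) (r : A ⊗[K] A)
    (hinv : Invariant s p (r + tau r)) (x y : A) :
    Φtot s p ((r + tau r) ⊗ₜ[K] (x ⊗ₜ[K] y)) = 0 := by
  have h1x : J1 s p (r + tau r) x = 0 := (hinv x).1
  have h1y : J1 s p (r + tau r) y = 0 := (hinv y).1
  have h2y : J2 s p (r + tau r) y = 0 := (hinv y).2
  simp only [Φtot, LinearMap.add_apply, LinearMap.sub_apply, LinearMap.neg_apply,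
    LinearMap.comp_apply, idτ, τm, LinearEquiv.coe_coe, TensorProduct.map_tmul,
    TensorProduct.comm_tmul, LinearMap.id_coe, id_eq, Jm_tmul, h1x, h1y, h2y,
    TensorProduct.zero_tmul, map_zero]
  abel

lemma phi_kill (s p : A →ₗ[K] A →ₗ[K] A) (r : A ⊗[K] A)
    (hinv : Invariant s p (r + tau r)) (v : A ⊗[K] A) :
    Φtot s p ((r + tau r) ⊗ₜ[K] v) = 0 := by
  induction v using TensorProduct.induction_on with
  | zero => simp
  | tmul x y => exact phi_pure s p r hinv x y
  | add x y hx hy => simp only [TensorProduct.tmul_add, map_add, hx, hy, add_zero]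

lemma key (s p : A →ₗ[K] A →ₗ[K] A) (r : A ⊗[K] A)
    (hinv : Invariant s p (r + tau r)) :
    adD s p (tau r) = adD s p r := by
  have hN := Nm_diag_zero s p r
  have hphi := phi_kill s p r hinv r
  have hDL : adD s p (tau r) = DL s p (TT (r ⊗ₜ[K] r)) := by
    rw [adD_eq_DL]
    simp [TT, tau_eq]
  have harg : TensorProduct.map ((LinearMap.id : A ⊗[K] A →ₗ[K] A ⊗[K] A) + τm (K := K))
      LinearMap.id (r ⊗ₜ[K] r) = (r + tau r) ⊗ₜ[K] r := by
    simp [tau_eq, TensorProduct.map_tmul]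
  simp only [Nm, LinearMap.sub_apply, LinearMap.comp_apply, harg, hphi, sub_zero,
    sub_eq_zero] at hN
  rw [hDL, adD_eq_DL s p r, hN]

end Stmt9Aux

/-- if `r + τ(r)` is invariant then `D(r) = 0` iff `D(τ(r)) = 0`. -/
theorem stmt9 [FiniteDimensional K A]
    (s p : A →ₗ[K] A →ₗ[K] A) (h : IsAntiDend s p) (r : A ⊗[K] A)
    (hinv : Invariant s p (r + tau r)) :
    AYBE s p r ↔ AYBE s p (tau r) := by
  have hkey := Stmt9Aux.key s p r hinv
  unfold AYBE
  rw [hkey]
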